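/- arXiv:2510.03774 — 5 statements merged into one kernel-verified Lean document; each statement's English description precedes it below -/
import Mathlib

section
/- Let E be a uniformly smooth real Banach space whose modulus of smoothness satisfies ρ_E(τ) ≤ K·τ^q for some constant K > 0 and some 1 < q ≤ 2. Then with M = 2^{2q}·K, for all x, y ∈ E: ‖Jx − Jy‖ ≤ M·‖x − y‖^{q−1}·max{‖x‖, ‖y‖}^{2−q}, where J is the normalized duality mapping. -/
/-!
The duality map is a subgradient of `‖·‖² / 2`, so testing `J x` and `J y` at `x ± h` and `y ± h`
bounds `(J x - J y) h` by `(J x - J y) (x - y)` and the symmetric second differences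
`‖z + h‖² + ‖z - h‖² - 2‖z‖²` at `z = x, y`, which the modulus of smoothness controls by
`2‖h‖² + 4K‖h‖^q ‖z‖^(2-q)`. Taking `h = d • w` for unit vectors `w`, with `d = ‖x - y‖` and
`R = max ‖x‖ ‖y‖`, gives `‖J x - J y‖ ≤ 2d + 4K d^(q-1) R^(2-q)`. When `d` is comparable to `R` the
trivial bound `2R` suffices. Otherwise `(d/R)^(q-1) < 2 / (4^q K)`, and since `4^q K ≥ 3` (evaluate
the modulus at `τ = 4` on a line), `2d` is absorbed by `(4^q - 4) K d^(q-1) R^(2-q)` through the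
elementary inequality `(2/3)^(1/s) ≤ 1 - 4^(-s)` for `0 < s ≤ 1`.
-/

open Set

/-- Modulus of smoothness of a normed space `E`. -/
noncomputable def smoothnessModulus (E : Type*) [NormedAddCommGroup E] [NormedSpace ℝ E]
    (τ : ℝ) : ℝ :=
  sSup {t : ℝ | ∃ x y : E, ‖x‖ ≤ 1 ∧ ‖y‖ ≤ 1 ∧ t = (‖x + τ • y‖ + ‖x - τ • y‖) / 2 - 1}

lemma rpow_natCast_div_le_of_pow_le_pow {x y : ℝ} {m n : ℕ} (hx : 0 ≤ x) (hy : 0 ≤ y)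
    (hn : n ≠ 0) (h : x ^ m ≤ y ^ n) : x ^ ((m : ℝ) / n) ≤ y := by
  rw [div_eq_mul_inv, Real.rpow_mul hx, Real.rpow_natCast,
    Real.rpow_inv_le_iff_of_pos (pow_nonneg hx m) hy (by positivity), Real.rpow_natCast]
  exact h

lemma two_thirds_rpow_inv_le_one_sub_quarter_rpow_of_le {s : ℝ} (hs0 : 0 < s) (hs : s ≤ 3 / 8) :
    (2 / 3 : ℝ) ^ s⁻¹ ≤ 1 - (1 / 4 : ℝ) ^ s := by
  set c := Real.log 3 - Real.log 2
  set b := 2 * Real.log 2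
  have hc : 0.4054651077 < c := by
    linarith [Real.log_three_gt_d9, Real.log_two_lt_d9]
  have hb : 1.3862943606 < b := by linarith [Real.log_two_gt_d9]
  have hb' : b < 1.3862943616 := by linarith [Real.log_two_lt_d9]
  have he : 2.7182818283 < Real.exp 1 := Real.exp_one_gt_d9
  have h23 : (2 / 3 : ℝ) ^ s⁻¹ = (Real.exp (c / s))⁻¹ := by
    rw [Real.rpow_def_of_pos (by norm_num), ← Real.exp_neg,
      Real.log_div (by norm_num) (by norm_num)]
    simp only [c]
    ring_nf
  have h14 : (1 / 4 : ℝ) ^ s = (Real.exp (b * s))⁻¹ := by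
    rw [Real.rpow_def_of_pos (by norm_num), ← Real.exp_neg, one_div, Real.log_inv,
      show (4 : ℝ) = 2 ^ 2 by norm_num, Real.log_pow]
    simp only [b]
    push_cast
    ring_nf
  have hexp_c : Real.exp 1 * (c / s) ≤ Real.exp (c / s) := by
    have := Real.add_one_le_exp (c / s - 1)
    rw [Real.exp_sub, le_div_iff₀ (Real.exp_pos 1)] at this
    linarith
  have hexp_b : 1 + b * s ≤ Real.exp (b * s) := by linarith [Real.add_one_le_exp (b * s)]
  rw [h23, h14]
  calc (Real.exp (c / s))⁻¹ ≤ (Real.exp 1 * (c / s))⁻¹ := inv_anti₀ (by positivity) hexp_c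
    _ ≤ 1 - (1 + b * s)⁻¹ := by
      rw [inv_eq_one_div, inv_eq_one_div, div_le_iff₀ (by positivity)]
      field_simp
      have hebc : 1 + b * s ≤ Real.exp 1 * b * c := by
        have h₁ : 2.7182818283 * 1.3862943606 < Real.exp 1 * b := by nlinarith
        nlinarith
      nlinarith [mul_le_mul_of_nonneg_left hebc hs0.le]
    _ ≤ 1 - (Real.exp (b * s))⁻¹ := by gcongr

-- Both sides are monotone in `s`, so a number `B` separating them at the two ends of
-- `[p / k, n / m]` certifies the inequality on the whole interval.
lemma two_thirds_rpow_inv_le_one_sub_quarter_rpow_of_mem_Icc {s : ℝ} (p k m n : ℕ) (B : ℝ)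
    (hs0 : 0 < s) (hs : s ∈ Icc ((p : ℝ) / k) ((n : ℝ) / m)) (hk : k ≠ 0) (hn : n ≠ 0)
    (hB0 : 0 ≤ B) (hB1 : B ≤ 1) (hB : (2 / 3 : ℝ) ^ m ≤ B ^ n)
    (hA : (1 / 4 : ℝ) ^ p ≤ (1 - B) ^ k) :
    (2 / 3 : ℝ) ^ s⁻¹ ≤ 1 - (1 / 4 : ℝ) ^ s := by
  have h23 : (2 / 3 : ℝ) ^ s⁻¹ ≤ (2 / 3 : ℝ) ^ ((m : ℝ) / n) := by
    refine Real.rpow_le_rpow_of_exponent_ge (by norm_num) (by norm_num) ?_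
    rw [← inv_div]
    exact inv_anti₀ hs0 hs.2
  have h14 : (1 / 4 : ℝ) ^ s ≤ (1 / 4 : ℝ) ^ ((p : ℝ) / k) :=
    Real.rpow_le_rpow_of_exponent_ge (by norm_num) (by norm_num) hs.1
  linarith [rpow_natCast_div_le_of_pow_le_pow (by norm_num) hB0 hn hB,
    rpow_natCast_div_le_of_pow_le_pow (by norm_num) (sub_nonneg.2 hB1) hk hA]

lemma two_thirds_rpow_inv_le_one_sub_quarter_rpow {s : ℝ} (hs0 : 0 < s) (hs1 : s ≤ 1) :
    (2 / 3 : ℝ) ^ s⁻¹ ≤ 1 - (1 / 4 : ℝ) ^ s := by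
  rcases le_total s (3 / 8) with h | h₀
  · exact two_thirds_rpow_inv_le_one_sub_quarter_rpow_of_le hs0 h
  have step := fun p k m n B ↦ two_thirds_rpow_inv_le_one_sub_quarter_rpow_of_mem_Icc p k m n B hs0
  rcases le_total s (4 / 9) with h | h₁
  · refine step 3 8 9 4 0.402 ⟨?_, ?_⟩ ?_ ?_ ?_ ?_ ?_ ?_ <;> norm_num <;> linarith
  rcases le_total s (1 / 2) with h | h₂
  · refine step 4 9 2 1 0.45 ⟨?_, ?_⟩ ?_ ?_ ?_ ?_ ?_ ?_ <;> norm_num <;> linarith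
  rcases le_total s (5 / 9) with h | h₃
  · refine step 1 2 9 5 0.49 ⟨?_, ?_⟩ ?_ ?_ ?_ ?_ ?_ ?_ <;> norm_num <;> linarith
  rcases le_total s (5 / 8) with h | h₄
  · refine step 5 9 8 5 0.53 ⟨?_, ?_⟩ ?_ ?_ ?_ ?_ ?_ ?_ <;> norm_num <;> linarith
  rcases le_total s (5 / 7) with h | h₅
  · refine step 5 8 7 5 0.57 ⟨?_, ?_⟩ ?_ ?_ ?_ ?_ ?_ ?_ <;> norm_num <;> linarith
  rcases le_total s (5 / 6) with h | h₆
  · refine step 5 7 6 5 0.62 ⟨?_, ?_⟩ ?_ ?_ ?_ ?_ ?_ ?_ <;> norm_num <;> linarith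
  · refine step 5 6 1 1 0.67 ⟨?_, ?_⟩ ?_ ?_ ?_ ?_ ?_ ?_ <;> norm_num <;> linarith

lemma two_mul_rpow_one_sub_le_of_mul_rpow_lt_two {r s L : ℝ} (hr : 0 < r) (hs0 : 0 < s)
    (hs1 : s ≤ 1) (hL : 3 ≤ L) (h : L * r ^ s < 2) :
    2 * r ^ (1 - s) ≤ L * (1 - (1 / 4 : ℝ) ^ s) := by
  have he : 0 ≤ (1 - s) / s := div_nonneg (by linarith) hs0.le
  have hrs : r ^ s ≤ 2 / 3 := by
    rw [le_div_iff₀ (by norm_num)]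
    nlinarith [Real.rpow_pos_of_pos hr s]
  have hpow : r ^ (1 - s) ≤ (2 / 3 : ℝ) ^ ((1 - s) / s) := by
    calc r ^ (1 - s) = (r ^ s) ^ ((1 - s) / s) := by
          rw [← Real.rpow_mul hr.le, mul_div_cancel₀ _ hs0.ne']
      _ ≤ (2 / 3 : ℝ) ^ ((1 - s) / s) := Real.rpow_le_rpow (by positivity) hrs he
  have h23 : (2 / 3 : ℝ) ^ ((1 - s) / s) = 3 / 2 * (2 / 3 : ℝ) ^ s⁻¹ := by
    rw [sub_div, div_self hs0.ne', one_div, Real.rpow_sub_one (by norm_num)]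
    ring
  have h14 : (1 / 4 : ℝ) ^ s ≤ 1 := Real.rpow_le_one (by norm_num) (by norm_num) hs0.le
  nlinarith [two_thirds_rpow_inv_le_one_sub_quarter_rpow hs0 hs1]

section
variable {E : Type*} [NormedAddCommGroup E] [NormedSpace ℝ E]

lemma le_smoothnessModulus {x y : E} (hx : ‖x‖ ≤ 1) (hy : ‖y‖ ≤ 1) {τ : ℝ} (hτ : 0 ≤ τ) :
    (‖x + τ • y‖ + ‖x - τ • y‖) / 2 - 1 ≤ smoothnessModulus E τ := by
  refine le_csSup ⟨τ, ?_⟩ ⟨x, y, hx, hy, rfl⟩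
  rintro _ ⟨a, b, ha, hb, rfl⟩
  have h₁ := norm_add_le a (τ • b)
  have h₂ := norm_sub_le a (τ • b)
  rw [norm_smul, Real.norm_of_nonneg hτ] at h₁ h₂
  nlinarith

lemma three_le_four_rpow_mul [Nontrivial E] {K q : ℝ} (hρ : smoothnessModulus E 4 ≤ K * 4 ^ q) :
    3 ≤ 4 ^ q * K := by
  obtain ⟨v, hv⟩ := exists_norm_eq E zero_le_one
  have h := le_smoothnessModulus hv.le hv.le (by norm_num : (0 : ℝ) ≤ 4)
  rw [show v + (4 : ℝ) • v = (5 : ℝ) • v by module, show v - (4 : ℝ) • v = (-3 : ℝ) • v by module,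
    norm_smul, norm_smul, hv] at h
  norm_num at h
  linarith

variable {K q : ℝ}

lemma norm_add_add_norm_sub_le (hK : 0 ≤ K)
    (hρ : ∀ τ > (0 : ℝ), smoothnessModulus E τ ≤ K * τ ^ q) {x : E} (hx : x ≠ 0) (h : E) :
    ‖x + h‖ + ‖x - h‖ ≤ 2 * ‖x‖ + 2 * K * ‖h‖ ^ q * ‖x‖ ^ (1 - q) := by
  rcases eq_or_ne h 0 with rfl | hh
  · simp only [add_zero, sub_zero]
    have : 0 ≤ K * ‖(0 : E)‖ ^ q * ‖x‖ ^ (1 - q) := by positivity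
    linarith
  have ha : 0 < ‖x‖ := norm_pos_iff.2 hx
  have hb : 0 < ‖h‖ := norm_pos_iff.2 hh
  set τ := ‖h‖ / ‖x‖
  have e₁ : x + h = ‖x‖ • (‖x‖⁻¹ • x + τ • (‖h‖⁻¹ • h)) := by
    simp only [τ]; match_scalars <;> field_simp
  have e₂ : x - h = ‖x‖ • (‖x‖⁻¹ • x - τ • (‖h‖⁻¹ • h)) := by
    simp only [τ]; match_scalars <;> field_simp
  have hmod := le_smoothnessModulus (x := ‖x‖⁻¹ • x) (y := ‖h‖⁻¹ • h)
    (norm_smul_inv_norm hx).le (norm_smul_inv_norm hh).le (by positivity : 0 ≤ τ)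
  have hρτ := hρ τ (by positivity)
  have hτq : ‖x‖ * τ ^ q = ‖h‖ ^ q * ‖x‖ ^ (1 - q) := by
    rw [Real.div_rpow hb.le ha.le, Real.rpow_sub ha, Real.rpow_one]
    ring
  rw [e₁, e₂, norm_smul, norm_smul, norm_norm]
  nlinarith

lemma norm_add_sq_add_norm_sub_sq_le (hK : 0 ≤ K)
    (hρ : ∀ τ > (0 : ℝ), smoothnessModulus E τ ≤ K * τ ^ q) (x h : E) :
    ‖x + h‖ ^ 2 + ‖x - h‖ ^ 2 ≤ 2 * ‖x‖ ^ 2 + 2 * ‖h‖ ^ 2 + 4 * K * ‖h‖ ^ q * ‖x‖ ^ (2 - q) := by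
  rcases eq_or_ne x 0 with rfl | hx
  · have : 0 ≤ K * ‖h‖ ^ q * ‖(0 : E)‖ ^ (2 - q) := by positivity
    simp only [zero_add, zero_sub, norm_neg, norm_zero] at this ⊢
    linarith
  have ha : 0 < ‖x‖ := norm_pos_iff.2 hx
  have hsum := norm_add_add_norm_sub_le hK hρ hx h
  have hplus : |‖x + h‖ - ‖x‖| ≤ ‖h‖ := by simpa using abs_norm_sub_norm_le (x + h) x
  have hminus : |‖x - h‖ - ‖x‖| ≤ ‖h‖ := by simpa using abs_norm_sub_norm_le (x - h) x
  have hpow : ‖x‖ ^ (2 - q) = ‖x‖ * ‖x‖ ^ (1 - q) := by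
    rw [show 2 - q = 1 + (1 - q) by ring, Real.rpow_add ha, Real.rpow_one]
  -- `A² + B² - 2a² = (A - a)² + (B - a)² + 2a (A + B - 2a)`
  rw [hpow]
  nlinarith [sq_abs (‖x + h‖ - ‖x‖), sq_abs (‖x - h‖ - ‖x‖), abs_nonneg (‖x + h‖ - ‖x‖),
    abs_nonneg (‖x - h‖ - ‖x‖), mul_le_mul_of_nonneg_left hsum ha.le]

lemma two_mul_apply_le_norm_add_sq_sub_norm_sq (f : E →L[ℝ] ℝ) {x : E} (hfx : f x = ‖x‖ ^ 2)
    (hf : ‖f‖ ≤ ‖x‖) (h : E) : 2 * f h ≤ ‖x + h‖ ^ 2 - ‖x‖ ^ 2 := by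
  have hle : f (x + h) ≤ ‖x‖ * ‖x + h‖ :=
    (le_abs_self _).trans ((f.le_opNorm _).trans (by gcongr))
  rw [map_add, hfx] at hle
  nlinarith [sq_nonneg (‖x‖ - ‖x + h‖)]

lemma four_mul_sub_apply_le (f g : E →L[ℝ] ℝ) {x y : E} (hfx : f x = ‖x‖ ^ 2) (hf : ‖f‖ ≤ ‖x‖)
    (hgy : g y = ‖y‖ ^ 2) (hg : ‖g‖ ≤ ‖y‖) (h : E) :
    4 * (f - g) h ≤ 2 * (f - g) (x - y) + (‖x + h‖ ^ 2 + ‖x - h‖ ^ 2 - 2 * ‖x‖ ^ 2)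
      + (‖y + h‖ ^ 2 + ‖y - h‖ ^ 2 - 2 * ‖y‖ ^ 2) := by
  have h₁ := two_mul_apply_le_norm_add_sq_sub_norm_sq f hfx hf h
  have h₂ := two_mul_apply_le_norm_add_sq_sub_norm_sq g hgy hg (-h)
  have h₃ := two_mul_apply_le_norm_add_sq_sub_norm_sq f hfx hf (y + h - x)
  have h₄ := two_mul_apply_le_norm_add_sq_sub_norm_sq g hgy hg (x - h - y)
  simp only [map_add, map_sub, map_neg, ← sub_eq_add_neg, add_sub_cancel] at h₁ h₂ h₃ h₄
  simp only [sub_apply, map_sub]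
  rw [hfx, hgy] at *
  linarith

variable {x y : E}

lemma norm_sub_le_of_smoothnessModulus_le (f g : E →L[ℝ] ℝ) (hfx : f x = ‖x‖ ^ 2)
    (hf : ‖f‖ ≤ ‖x‖) (hgy : g y = ‖y‖ ^ 2) (hg : ‖g‖ ≤ ‖y‖) (hK : 0 ≤ K) (hq2 : q ≤ 2)
    (hρ : ∀ τ > (0 : ℝ), smoothnessModulus E τ ≤ K * τ ^ q) (hxy : x ≠ y) :
    ‖f - g‖ ≤ 2 * ‖x - y‖ + 4 * K * ‖x - y‖ ^ (q - 1) * max ‖x‖ ‖y‖ ^ (2 - q) := by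
  set d := ‖x - y‖
  set R := max ‖x‖ ‖y‖
  have hd : 0 < d := norm_pos_iff.2 (sub_ne_zero.2 hxy)
  have hdq : d ^ q = d * d ^ (q - 1) := by
    rw [Real.rpow_sub hd, Real.rpow_one]
    field_simp
  have hΔ : ∀ z : E, ‖z‖ ≤ R → ∀ w : E, ‖w‖ = 1 →
      ‖z + d • w‖ ^ 2 + ‖z - d • w‖ ^ 2 - 2 * ‖z‖ ^ 2 ≤ 2 * d ^ 2 + 4 * K * d ^ q * R ^ (2 - q) :=
    fun z hz w hw ↦ by
      have := norm_add_sq_add_norm_sub_sq_le hK hρ z (d • w)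
      rw [norm_smul, hw, mul_one, Real.norm_of_nonneg hd.le] at this
      have : ‖z‖ ^ (2 - q) ≤ R ^ (2 - q) := by gcongr
      have : 0 ≤ K * d ^ q := by positivity
      nlinarith
  have hxy' : (f - g) (x - y) ≤ ‖f - g‖ * d :=
    (le_abs_self _).trans ((f - g).le_opNorm _)
  set C := (‖f - g‖ + 2 * d + 4 * K * d ^ (q - 1) * R ^ (2 - q)) / 2
  have hunit : ∀ w : E, ‖w‖ = 1 → (f - g) w ≤ C := fun w hw ↦ by
    have h4 := four_mul_sub_apply_le f g hfx hf hgy hg (d • w)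
    rw [map_smul, smul_eq_mul] at h4
    have hx := hΔ x (le_max_left _ _) w hw
    have hy := hΔ y (le_max_right _ _) w hw
    rw [hdq] at hx hy
    have : d * (4 * (f - g) w) ≤ d * (4 * C) := by
      simp only [C]; nlinarith
    nlinarith
  have hC : ‖f - g‖ ≤ C := by
    refine ContinuousLinearMap.opNorm_le_of_unit_norm (by positivity) fun w hw ↦ ?_
    rw [Real.norm_eq_abs, abs_le]
    have := hunit (-w) (by rwa [norm_neg])
    rw [map_neg] at this
    exact ⟨by linarith, hunit w hw⟩
  simp only [C] at hC
  linarith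

end

lemma le_four_rpow_mul_of_le_of_le {F d R K q : ℝ} (hd : 0 < d) (hR : 0 < R) (hq1 : 1 < q)
    (hq2 : q ≤ 2) (hK : 3 ≤ 4 ^ q * K) (hFR : F ≤ 2 * R)
    (hF : F ≤ 2 * d + 4 * K * d ^ (q - 1) * R ^ (2 - q)) :
    F ≤ 4 ^ q * K * d ^ (q - 1) * R ^ (2 - q) := by
  have hsplit : ∀ {t : ℝ}, 0 < t → t = t ^ (q - 1) * t ^ (2 - q) := fun ht ↦ by
    rw [← Real.rpow_add ht, show q - 1 + (2 - q) = 1 by ring, Real.rpow_one]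
  rcases le_or_gt (2 * R ^ (q - 1)) (4 ^ q * K * d ^ (q - 1)) with hRd | hRd
  · calc F ≤ 2 * R := hFR
      _ = 2 * R ^ (q - 1) * R ^ (2 - q) := by rw [mul_assoc, ← hsplit hR]
      _ ≤ 4 ^ q * K * d ^ (q - 1) * R ^ (2 - q) := by gcongr
  · have hsmall : 4 ^ q * K * (d / R) ^ (q - 1) < 2 := by
      rw [Real.div_rpow hd.le hR.le, ← mul_div_assoc, div_lt_iff₀ (by positivity)]
      exact hRd
    have key := two_mul_rpow_one_sub_le_of_mul_rpow_lt_two (div_pos hd hR) (by linarith)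
      (by linarith) hK hsmall
    have h4 : 4 ^ q * (1 / 4 : ℝ) ^ (q - 1) = 4 := by
      rw [one_div, Real.inv_rpow (by norm_num), Real.rpow_sub (by norm_num), Real.rpow_one]
      field_simp
    have hd' : d = (d / R) ^ (2 - q) * R ^ (2 - q) * d ^ (q - 1) := by
      rw [Real.div_rpow hd.le hR.le, div_mul_cancel₀ _ (by positivity), mul_comm, ← hsplit hd]
    rw [show 1 - (q - 1) = 2 - q by ring] at key
    have h2d : 2 * d ≤ (4 ^ q * K - 4 * K) * d ^ (q - 1) * R ^ (2 - q) := by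
      calc 2 * d = 2 * (d / R) ^ (2 - q) * (R ^ (2 - q) * d ^ (q - 1)) := by
            linear_combination 2 * hd'
        _ ≤ 4 ^ q * K * (1 - (1 / 4 : ℝ) ^ (q - 1)) * (R ^ (2 - q) * d ^ (q - 1)) := by
            gcongr
        _ = (4 ^ q * K - 4 * K) * d ^ (q - 1) * R ^ (2 - q) := by
            linear_combination (-K * R ^ (2 - q) * d ^ (q - 1)) * h4
    linarith

theorem stmt6_general {E : Type*} [NormedAddCommGroup E] [NormedSpace ℝ E]
    (J : E → (E →L[ℝ] ℝ))
    (hJ : ∀ x : E, J x x = ‖x‖ ^ 2) (hJn : ∀ x : E, ‖J x‖ = ‖x‖)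
    (K q : ℝ) (hK : 0 < K) (hq1 : 1 < q) (hq2 : q ≤ 2)
    (hρ : ∀ τ > (0:ℝ), smoothnessModulus E τ ≤ K * τ ^ q)
    (x y : E) :
    ‖J x - J y‖ ≤ (2 ^ (2 * q) * K) * ‖x - y‖ ^ (q - 1) * (max ‖x‖ ‖y‖) ^ (2 - q) := by
  rcases eq_or_ne x y with rfl | hxy
  · simp [Real.zero_rpow (sub_ne_zero.2 hq1.ne')]
  have : Nontrivial E := nontrivial_of_ne x y hxy
  have hd : 0 < ‖x - y‖ := norm_pos_iff.2 (sub_ne_zero.2 hxy)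
  have hx := le_max_left ‖x‖ ‖y‖
  have hy := le_max_right ‖x‖ ‖y‖
  have hR : 0 < max ‖x‖ ‖y‖ := by linarith [norm_sub_le x y]
  have hFR : ‖J x - J y‖ ≤ 2 * max ‖x‖ ‖y‖ := by
    linarith [norm_sub_le (J x) (J y), hJn x, hJn y]
  rw [Real.rpow_mul (by norm_num), show (2 : ℝ) ^ (2 : ℝ) = 4 by norm_num]
  exact le_four_rpow_mul_of_le_of_le hd hR hq1 hq2 (three_le_four_rpow_mul (hρ 4 (by norm_num))) hFR
    (norm_sub_le_of_smoothnessModulus_le (J x) (J y) (hJ x) (hJn x).le (hJ y) (hJn y).le hK.le hq2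
      hρ hxy)

theorem stmt6 {E : Type*} [NormedAddCommGroup E] [NormedSpace ℝ E] [CompleteSpace E]
    (J : E → (E →L[ℝ] ℝ))
    (hJ : ∀ x : E, J x x = ‖x‖ ^ 2) (hJn : ∀ x : E, ‖J x‖ = ‖x‖)
    (K q : ℝ) (hK : 0 < K) (hq1 : 1 < q) (hq2 : q ≤ 2)
    (hρ : ∀ τ > (0:ℝ), smoothnessModulus E τ ≤ K * τ ^ q)
    (x y : E) :
    ‖J x - J y‖ ≤ (2 ^ (2 * q) * K) * ‖x - y‖ ^ (q - 1) * (max ‖x‖ ‖y‖) ^ (2 - q) :=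
  stmt6_general J hJ hJn K q hK hq1 hq2 hρ x y
end

section
/- Let E be a smooth Banach space, C ⊆ E nonempty, and T: C → E a mapping of firmly nonexpansive type, i.e., ⟨Tx − Ty, JTx − JTy⟩ ≤ ⟨Tx − Ty, Jx − Jy⟩ for all x, y ∈ C. Suppose there exists μ ≥ 1 such that ⟨u − v, Ju − Jv⟩ ≥ (1/μ)‖u − v‖² for all u, v ∈ E. Then ‖Tx − Ty‖ ≤ μ‖Jx − Jy‖ for all x, y ∈ C. -/
theorem stmt8 {E : Type*} [NormedAddCommGroup E] [NormedSpace ℝ E] [CompleteSpace E]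
    (J : E → (E →L[ℝ] ℝ))
    (hJ : ∀ x : E, J x x = ‖x‖ ^ 2) (hJn : ∀ x : E, ‖J x‖ = ‖x‖)
    (C : Set E) (hC : C.Nonempty) (T : E → E)
    -- firmly nonexpansive type
    (hT : ∀ x ∈ C, ∀ y ∈ C,
      (J (T x) - J (T y)) (T x - T y) ≤ (J x - J y) (T x - T y))
    (μ : ℝ) (hμ : 1 ≤ μ)
    (hcoer : ∀ u v : E, (1 / μ) * ‖u - v‖ ^ 2 ≤ (J u - J v) (u - v)) :
    ∀ x ∈ C, ∀ y ∈ C, ‖T x - T y‖ ≤ μ * ‖J x - J y‖ := by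
  intro x hx y hy
  have hμ0 : 0 < μ := lt_of_lt_of_le one_pos hμ
  set d := ‖T x - T y‖ with hd
  rcases eq_or_lt_of_le (norm_nonneg (T x - T y)) with h0 | h0
  · rw [hd, ← h0]
    positivity
  have h1 : (1 / μ) * d ^ 2 ≤ (J x - J y) (T x - T y) :=
    le_trans (hcoer (T x) (T y)) (hT x hx y hy)
  have h2 : (J x - J y) (T x - T y) ≤ ‖J x - J y‖ * d :=
    le_trans (le_abs_self _) (by
      have := (J x - J y).le_opNorm (T x - T y)
      rwa [Real.norm_eq_abs] at this)
  have h3 : d ^ 2 ≤ μ * (‖J x - J y‖ * d) := by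
    have := le_trans h1 h2
    calc d ^ 2 = μ * ((1 / μ) * d ^ 2) := by field_simp
    _ ≤ μ * (‖J x - J y‖ * d) := by nlinarith
  nlinarith [sq_nonneg d]
end

section
/- Let E be a smooth, strictly convex and reflexive real Banach space, C a nonempty closed convex subset, and A ⊆ E × E* a monotone operator with D(A) ⊆ C ⊆ J⁻¹R(J + rA) for all r > 0. For r > 0, the resolvent J_r x = (J + rA)⁻¹Jx is well-defined and of firmly nonexpansive type: ⟨J_r x − J_r y, J J_r x − J J_r y⟩ ≤ ⟨J_r x − J_r y, Jx − Jy⟩ for all x, y ∈ C. -/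
theorem stmt10 {E : Type*} [NormedAddCommGroup E] [NormedSpace ℝ E] [CompleteSpace E]
    [StrictConvexSpace ℝ E]
    (J : E → (E →L[ℝ] ℝ))
    -- normalized duality mapping (single-valued by smoothness) and a bijection
    (hJ : ∀ x : E, J x x = ‖x‖ ^ 2) (hJn : ∀ x : E, ‖J x‖ = ‖x‖)
    (hJbij : Function.Bijective J)
    (C : Set E) (hCne : C.Nonempty) (hCcl : IsClosed C) (hCcv : Convex ℝ C)
    -- monotone operator A ⊆ E × E*
    (A : Set (E × (E →L[ℝ] ℝ)))
    (hmono : ∀ p ∈ A, ∀ p' ∈ A, 0 ≤ (p.2 - p'.2) (p.1 - p'.1))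
    -- D(A) ⊆ C
    (hDA : ∀ p ∈ A, p.1 ∈ C)
    (r : ℝ) (hr : 0 < r)
    -- range condition: the resolvent J_r = (J + rA)⁻¹J is defined on C
    (Jr : E → E)
    (hJr : ∀ x ∈ C, ∃ a : E →L[ℝ] ℝ, (Jr x, a) ∈ A ∧ J x = J (Jr x) + r • a) :
    ∀ x ∈ C, ∀ y ∈ C,
      (J (Jr x) - J (Jr y)) (Jr x - Jr y) ≤ (J x - J y) (Jr x - Jr y) := by
  intro x hx y hy
  obtain ⟨a, haA, hax⟩ := hJr x hx
  obtain ⟨b, hbA, hby⟩ := hJr y hy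
  have hm := hmono _ haA _ hbA
  have : (J x - J y) (Jr x - Jr y)
      = (J (Jr x) - J (Jr y)) (Jr x - Jr y) + r * ((a - b) (Jr x - Jr y)) := by
    rw [hax, hby]
    simp [ContinuousLinearMap.sub_apply, ContinuousLinearMap.add_apply,
      ContinuousLinearMap.smul_apply]
    ring
  rw [this]
  nlinarith [hm]
end

section
/- Let E be a q-uniformly smooth (1 < q ≤ 2) and 2-uniformly convex real Banach space, C a nonempty closed convex subset, and A ⊆ E × E* a monotone operator with D(A) ⊆ C ⊆ J⁻¹R(J + rA) for all r > 0. Fix r > 0 and let J_r x = (J + rA)⁻¹Jx for x ∈ C. Then for every R > 0 there is a constant L such that for all x, y ∈ C with ‖x‖ ≤ R and ‖y‖ ≤ R, ‖J_r x − J_r y‖ ≤ L‖x − y‖^{q−1}. -/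
/-!
Monotonicity of `A` makes the resolvent firmly nonexpansive in the duality pairing:
`⟨J(J_r x) - J(J_r y), J_r x - J_r y⟩ ≤ ⟨Jx - Jy, J_r x - J_r y⟩`. Two-uniform convexity makes `J`
strongly monotone, so the left side is at least `μ ‖J_r x - J_r y‖²`, and it remains to show that
`J` is `(q - 1)`-Hölder on bounded sets.

Both facts come from one inequality. In a space where `c ‖u - v‖ ^ p ≤ 2 - ‖u + v‖` on the unit
ball (`p ≥ 2`), `‖w - z‖ ^ p` is bounded by `(‖w‖ - ‖z‖)² + (‖w‖ + ‖z‖) (‖w‖ + ‖z‖ - ‖w + z‖)` up to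
constants and a factor `R ^ (p - 2)`, and that expression is at most `⟨Jx - Jy, x - y⟩` both for
`(w, z) = (x, y)` and for `(w, z) = (Jx, Jy)`. Applied in `E` with `p = 2` this is strong
monotonicity. By Lindenstrauss duality `E*` satisfies it with `p = q / (q - 1)`, and then
`κ ‖Jx - Jy‖ ^ p ≤ ‖Jx - Jy‖ ‖x - y‖ R ^ (p - 2)` is the Hölder estimate, as `(p - 1)(q - 1) = 1`.
-/

open Set

/-- Modulus of convexity of a normed space `E`. -/
noncomputable def convexityModulus (E : Type*) [NormedAddCommGroup E] [NormedSpace ℝ E]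
    (ε : ℝ) : ℝ :=
  sInf {t : ℝ | ∃ x y : E, ‖x‖ ≤ 1 ∧ ‖y‖ ≤ 1 ∧ ‖x - y‖ = ε ∧ t = 1 - ‖x + y‖ / 2}

lemma Real.rpow_le_sq_mul_rpow {t M p : ℝ} (ht : 0 ≤ t) (htM : t ≤ M) (hp : 2 ≤ p) :
    t ^ p ≤ t ^ 2 * M ^ (p - 2) := by
  calc t ^ p = t ^ (2:ℝ) * t ^ (p - 2) := by
        rw [← Real.rpow_add' ht (by linarith), add_sub_cancel]
    _ ≤ t ^ 2 * M ^ (p - 2) := by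
        rw [Real.rpow_two]
        gcongr

lemma Real.add_rpow_le_two_rpow_mul {s t p : ℝ} (hs : 0 ≤ s) (ht : 0 ≤ t) (hp : 1 ≤ p) :
    (s + t) ^ p ≤ 2 ^ (p - 1) * (s ^ p + t ^ p) := by
  lift s to NNReal using hs
  lift t to NNReal using ht
  exact_mod_cast NNReal.rpow_add_le_mul_rpow_add_rpow s t hp

lemma Real.le_rpow_mul_rpow_of_mul_rpow_le {κ D t M p s : ℝ} (hκ : 0 < κ) (hD : 0 ≤ D)
    (ht : 0 ≤ t) (hM : 0 ≤ M) (hs : 0 ≤ s) (hps : (p - 1) * s = 1)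
    (h : κ * D ^ p ≤ D * (t * M)) : D ≤ (M / κ) ^ s * t ^ s := by
  rcases hD.eq_or_lt with rfl | hD
  · positivity
  have hDp : D ^ (p - 1) ≤ t * M / κ := by
    rw [le_div_iff₀' hκ, Real.rpow_sub_one hD.ne', mul_div_assoc', div_le_iff₀ hD]
    linarith
  calc D = (D ^ (p - 1)) ^ s := by rw [← Real.rpow_mul hD.le, hps, Real.rpow_one]
    _ ≤ (t * M / κ) ^ s := by gcongr
    _ = (M / κ) ^ s * t ^ s := by
        rw [mul_div_assoc, Real.mul_rpow ht (by positivity), mul_comm]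

section Functionals

variable {E : Type*} [NormedAddCommGroup E] [NormedSpace ℝ E]

lemma ContinuousLinearMap.apply_le_opNorm_mul_norm (φ : E →L[ℝ] ℝ) (x : E) : φ x ≤ ‖φ‖ * ‖x‖ :=
  (le_abs_self _).trans (φ.le_opNorm x)

lemma ContinuousLinearMap.opNorm_le_of_apply_le {φ : E →L[ℝ] ℝ} {M : ℝ}
    (h : ∀ x : E, ‖x‖ ≤ 1 → φ x ≤ M) : ‖φ‖ ≤ M := by
  have hM : 0 ≤ M := by simpa using h 0 (by simp)
  refine φ.opNorm_le_of_unit_norm hM fun x hx => abs_le.2 ⟨?_, h x hx.le⟩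
  have := h (-x) (by rw [norm_neg, hx])
  rw [map_neg] at this
  linarith

end Functionals

section Moduli

variable {E : Type*} [NormedAddCommGroup E] [NormedSpace ℝ E]

lemma norm_add_add_norm_sub_le_smoothnessModulus {τ : ℝ} (hτ : 0 ≤ τ) {x y : E}
    (hx : ‖x‖ ≤ 1) (hy : ‖y‖ ≤ 1) :
    ‖x + τ • y‖ + ‖x - τ • y‖ ≤ 2 + 2 * smoothnessModulus E τ := by
  have hτy : ∀ y : E, ‖y‖ ≤ 1 → ‖τ • y‖ ≤ τ := fun y hy => by
    rw [norm_smul, Real.norm_of_nonneg hτ]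
    exact mul_le_of_le_one_right hτ hy
  have hbdd : BddAbove
      {t : ℝ | ∃ x y : E, ‖x‖ ≤ 1 ∧ ‖y‖ ≤ 1 ∧ t = (‖x + τ • y‖ + ‖x - τ • y‖) / 2 - 1} := by
    refine ⟨τ, ?_⟩
    rintro t ⟨x', y', hx', hy', rfl⟩
    linarith [norm_add_le x' (τ • y'), norm_sub_le x' (τ • y'), hτy y' hy']
  have := le_csSup hbdd ⟨x, y, hx, hy, rfl⟩
  rw [← smoothnessModulus] at this
  linarith

lemma convexityModulus_norm_sub_le {x y : E} (hx : ‖x‖ ≤ 1) (hy : ‖y‖ ≤ 1) :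
    convexityModulus E ‖x - y‖ ≤ 1 - ‖x + y‖ / 2 := by
  refine csInf_le ⟨0, ?_⟩ ⟨x, y, hx, hy, rfl, rfl⟩
  rintro t ⟨x', y', hx', hy', -, rfl⟩
  linarith [norm_add_le x' y']

end Moduli

-- `δ_F(ε) ≥ c ε ^ p / 2` for the modulus of convexity, stated without the modulus.
def UniformlyConvexOfPower (F : Type*) [NormedAddCommGroup F] (p c : ℝ) : Prop :=
  ∀ u v : F, ‖u‖ ≤ 1 → ‖v‖ ≤ 1 → c * ‖u - v‖ ^ p ≤ 2 - ‖u + v‖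

section UniformConvexity

variable {E : Type*} [NormedAddCommGroup E] [NormedSpace ℝ E]

lemma uniformlyConvexOfPower_two_of_convexityModulus {c : ℝ}
    (h : ∀ ε ∈ Ioc (0:ℝ) 2, c * ε ^ 2 ≤ convexityModulus E ε) :
    UniformlyConvexOfPower E 2 (2 * c) := by
  intro u v hu hv
  rw [Real.rpow_two]
  rcases (norm_nonneg (u - v)).eq_or_lt with hε | hε
  · rw [← hε]
    linarith [norm_add_le u v]
  · have := h _ ⟨hε, by linarith [norm_sub_le u v]⟩
    linarith [convexityModulus_norm_sub_le hu hv]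

lemma ContinuousLinearMap.norm_add_add_mul_norm_sub_le_smoothnessModulus {τ : ℝ} (hτ : 0 ≤ τ)
    {f g : E →L[ℝ] ℝ} (hf : ‖f‖ ≤ 1) (hg : ‖g‖ ≤ 1) :
    ‖f + g‖ + τ * ‖f - g‖ ≤ 2 + 2 * smoothnessModulus E τ := by
  have hle : ∀ φ : E →L[ℝ] ℝ, ‖φ‖ ≤ 1 → ∀ x : E, φ x ≤ ‖x‖ := fun φ hφ x =>
    (φ.apply_le_opNorm_mul_norm x).trans (mul_le_of_le_one_left (norm_nonneg x) hφ)
  have hpair : ∀ x y : E, ‖x‖ ≤ 1 → ‖y‖ ≤ 1 →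
      (f + g) x + (τ • (f - g)) y ≤ 2 + 2 * smoothnessModulus E τ := fun x y hx hy => by
    have hsplit : (f + g) x + (τ • (f - g)) y = f (x + τ • y) + g (x - τ • y) := by
      simp only [add_apply, smul_apply, sub_apply, map_add, map_sub, map_smul, smul_eq_mul]
      ring
    rw [hsplit]
    linarith [hle f hf (x + τ • y), hle g hg (x - τ • y),
      norm_add_add_norm_sub_le_smoothnessModulus hτ hx hy]
  have hsum : ∀ y : E, ‖y‖ ≤ 1 →
      ‖f + g‖ ≤ 2 + 2 * smoothnessModulus E τ - (τ • (f - g)) y := fun y hy =>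
    opNorm_le_of_apply_le fun x hx => by linarith [hpair x y hx hy]
  have hdiff : ‖τ • (f - g)‖ ≤ 2 + 2 * smoothnessModulus E τ - ‖f + g‖ :=
    opNorm_le_of_apply_le fun y hy => by linarith [hsum y hy]
  rw [norm_smul, Real.norm_of_nonneg hτ] at hdiff
  linarith

lemma uniformlyConvexOfPower_dual_of_smoothnessModulus_le {K q : ℝ} (hK : 0 < K) (hq : 1 < q)
    (hρ : ∀ τ > (0:ℝ), smoothnessModulus E τ ≤ K * τ ^ q) :
    UniformlyConvexOfPower (E →L[ℝ] ℝ) (q / (q - 1)) (2 * (4 * K) ^ (q - 1)⁻¹)⁻¹ := by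
  intro f g hf hg
  have hq0 : 0 < q - 1 := by linarith
  rcases (norm_nonneg (f - g)).eq_or_lt with hε | hε
  · rw [← hε, Real.zero_rpow (by positivity)]
    linarith [norm_add_le f g]
  set ε := ‖f - g‖
  -- chosen so that `2 K τ ^ q = τ ε / 2` in `‖f + g‖ ≤ 2 + 2 K τ ^ q - τ ε`
  set τ := (ε / (4 * K)) ^ (q - 1)⁻¹ with hτdef
  have hτ : 0 < τ := by positivity
  have hτq : K * τ ^ q = τ * ε / 4 := by
    have : τ ^ (q - 1) = ε / (4 * K) := Real.rpow_inv_rpow (by positivity) hq0.ne'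
    rw [show q = (q - 1) + 1 by ring, Real.rpow_add_one hτ.ne', this]
    field_simp
  have hτε : τ * ε = ((4 * K) ^ (q - 1)⁻¹)⁻¹ * ε ^ (q / (q - 1)) := by
    have hexp : q / (q - 1) = (q - 1)⁻¹ + 1 := by field_simp; ring
    rw [hτdef, Real.div_rpow hε.le (by positivity), hexp, Real.rpow_add_one hε.ne']
    ring
  have := f.norm_add_add_mul_norm_sub_le_smoothnessModulus hτ.le hf hg
  have := hρ τ hτ
  rw [mul_inv, mul_assoc, ← hτε]
  linarith

end UniformConvexity

section Normalization

variable {F : Type*} [NormedAddCommGroup F] [NormedSpace ℝ F]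

lemma norm_smul_inv_norm_smul (x : F) : ‖x‖ • ‖x‖⁻¹ • x = x := by
  rcases eq_or_ne x 0 with rfl | hx
  · simp
  · rw [smul_inv_smul₀ (norm_ne_zero_iff.2 hx)]

lemma norm_inv_norm_smul_le_one (x : F) : ‖‖x‖⁻¹ • x‖ ≤ 1 := by
  rw [norm_smul, norm_inv, norm_norm]
  exact inv_mul_le_one_of_le₀ le_rfl (norm_nonneg x)

-- `w + z = ‖z‖ • (u + v) + (‖w‖ - ‖z‖) • u` for the normalizations `u`, `v` of `w`, `z`.
lemma norm_add_le_norm_mul_norm_add_inv_norm_smul {w z : F} (hzw : ‖z‖ ≤ ‖w‖) :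
    ‖w + z‖ ≤ ‖z‖ * ‖‖w‖⁻¹ • w + ‖z‖⁻¹ • z‖ + (‖w‖ - ‖z‖) := by
  have hsplit : w + z = ‖z‖ • (‖w‖⁻¹ • w + ‖z‖⁻¹ • z) + (‖w‖ - ‖z‖) • (‖w‖⁻¹ • w) := by
    rw [smul_add, sub_smul, norm_smul_inv_norm_smul, norm_smul_inv_norm_smul]
    abel
  calc ‖w + z‖
      ≤ ‖z‖ * ‖‖w‖⁻¹ • w + ‖z‖⁻¹ • z‖ + (‖w‖ - ‖z‖) * ‖‖w‖⁻¹ • w‖ := by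
        rw [hsplit]
        refine (norm_add_le _ _).trans_eq ?_
        rw [norm_smul, norm_smul, norm_norm, Real.norm_of_nonneg (sub_nonneg.2 hzw)]
    _ ≤ ‖z‖ * ‖‖w‖⁻¹ • w + ‖z‖⁻¹ • z‖ + (‖w‖ - ‖z‖) := by
        gcongr
        exact mul_le_of_le_one_right (sub_nonneg.2 hzw) (norm_inv_norm_smul_le_one w)

lemma norm_sub_le_norm_mul_norm_sub_inv_norm_smul {w z : F} (hzw : ‖z‖ ≤ ‖w‖) :
    ‖w - z‖ ≤ ‖z‖ * ‖‖w‖⁻¹ • w - ‖z‖⁻¹ • z‖ + (‖w‖ - ‖z‖) := by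
  have := norm_add_le_norm_mul_norm_add_inv_norm_smul (w := w) (z := -z)
    (by rwa [norm_neg])
  rwa [norm_neg, smul_neg, ← sub_eq_add_neg, ← sub_eq_add_neg] at this

end Normalization

namespace UniformlyConvexOfPower

variable {F : Type*} [NormedAddCommGroup F] [NormedSpace ℝ F] {p c : ℝ}

/-- The defect `‖w‖ + ‖z‖ - ‖w + z‖` of the triangle inequality controls the angle between
`w` and `z`; the difference `‖w‖ - ‖z‖` controls the rest of `w - z`. -/
lemma rpow_norm_sub_le (hF : UniformlyConvexOfPower F p c) (hc : 0 < c) (hp : 2 ≤ p)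
    {w z : F} {R : ℝ} (hwR : ‖w‖ ≤ R) (hzR : ‖z‖ ≤ R) :
    min c 1 / 2 ^ (p - 1) * ‖w - z‖ ^ p ≤
      ((‖w‖ - ‖z‖) ^ 2 + (‖w‖ + ‖z‖) * (‖w‖ + ‖z‖ - ‖w + z‖)) * R ^ (p - 2) := by
  wlog hzw : ‖z‖ ≤ ‖w‖ generalizing w z
  · have := this hzR hwR (le_of_not_ge hzw)
    rwa [norm_sub_rev, add_comm ‖z‖, add_comm z, sub_sq_comm] at this
  set a := ‖w‖
  set b := ‖z‖
  set ε := ‖‖w‖⁻¹ • w - ‖z‖⁻¹ • z‖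
  have hb : 0 ≤ b := norm_nonneg z
  have hε : 0 ≤ ε := norm_nonneg _
  have hR : 0 ≤ R := hb.trans hzR
  have hdefect : c * b * ε ^ p ≤ a + b - ‖w + z‖ := by
    have := hF _ _ (norm_inv_norm_smul_le_one w) (norm_inv_norm_smul_le_one z)
    nlinarith [norm_add_le_norm_mul_norm_add_inv_norm_smul hzw]
  have hsub : ‖w - z‖ ^ p ≤ 2 ^ (p - 1) * ((b * ε) ^ p + (a - b) ^ p) :=
    calc ‖w - z‖ ^ p ≤ (b * ε + (a - b)) ^ p := by
          gcongr
          exact norm_sub_le_norm_mul_norm_sub_inv_norm_smul hzw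
      _ ≤ 2 ^ (p - 1) * ((b * ε) ^ p + (a - b) ^ p) :=
          Real.add_rpow_le_two_rpow_mul (by positivity) (sub_nonneg.2 hzw) (by linarith)
  have hangle : c * (b * ε) ^ p ≤ (a + b) * (a + b - ‖w + z‖) * R ^ (p - 2) := by
    have hbp : b ^ p ≤ (a + b) * b * R ^ (p - 2) :=
      calc b ^ p ≤ b ^ 2 * R ^ (p - 2) := Real.rpow_le_sq_mul_rpow hb hzR hp
        _ ≤ (a + b) * b * R ^ (p - 2) := by gcongr; nlinarith
    calc c * (b * ε) ^ p = b ^ p * (c * ε ^ p) := by rw [Real.mul_rpow hb hε]; ring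
      _ ≤ (a + b) * b * R ^ (p - 2) * (c * ε ^ p) := by gcongr
      _ = (a + b) * (c * b * ε ^ p) * R ^ (p - 2) := by ring
      _ ≤ (a + b) * (a + b - ‖w + z‖) * R ^ (p - 2) := by gcongr
  have hradial : (a - b) ^ p ≤ (a - b) ^ 2 * R ^ (p - 2) :=
    Real.rpow_le_sq_mul_rpow (sub_nonneg.2 hzw) (by linarith) hp
  rw [div_mul_eq_mul_div, div_le_iff₀' (by positivity)]
  calc min c 1 * ‖w - z‖ ^ p
      ≤ 2 ^ (p - 1) * (min c 1 * (b * ε) ^ p + min c 1 * (a - b) ^ p) := by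
        rw [← mul_add, mul_left_comm]
        gcongr
    _ ≤ 2 ^ (p - 1) * (c * (b * ε) ^ p + (a - b) ^ p) := by
        gcongr
        · exact min_le_left _ _
        · exact mul_le_of_le_one_left (by positivity) (min_le_right _ _)
    _ ≤ 2 ^ (p - 1) * (((a - b) ^ 2 + (a + b) * (a + b - ‖w + z‖)) * R ^ (p - 2)) := by
        gcongr
        linarith

end UniformlyConvexOfPower

section DualityMap

variable {E : Type*} [NormedAddCommGroup E] [NormedSpace ℝ E] {J : E → (E →L[ℝ] ℝ)}

lemma two_mul_add_sq_sub_le_duality_pairing (hJ : ∀ x : E, J x x = ‖x‖ ^ 2) (x y : E) :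
    2 * (‖x‖ ^ 2 + ‖y‖ ^ 2) - ‖J x + J y‖ * ‖x + y‖ ≤ (J x - J y) (x - y) := by
  have hsum := (J x + J y).apply_le_opNorm_mul_norm (x + y)
  have hexp : (J x - J y) (x - y) + (J x + J y) (x + y) = 2 * (J x x + J y y) := by
    simp only [add_apply, sub_apply, map_add, map_sub]
    ring
  rw [hJ, hJ] at hexp
  linarith

lemma norm_duality_add_le (hJn : ∀ x : E, ‖J x‖ = ‖x‖) (x y : E) :
    ‖J x + J y‖ ≤ ‖x‖ + ‖y‖ :=
  (norm_add_le _ _).trans_eq (by rw [hJn, hJn])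

lemma exists_mul_sq_norm_sub_le_duality_pairing (hJ : ∀ x : E, J x x = ‖x‖ ^ 2)
    (hJn : ∀ x : E, ‖J x‖ = ‖x‖) {c : ℝ} (hc : 0 < c)
    (h2uc : ∀ ε ∈ Ioc (0:ℝ) 2, c * ε ^ 2 ≤ convexityModulus E ε) :
    ∃ μ > 0, ∀ x y : E, μ * ‖x - y‖ ^ 2 ≤ (J x - J y) (x - y) := by
  refine ⟨min (2 * c) 1 / 2 ^ ((2:ℝ) - 1), by positivity, fun x y => ?_⟩
  have key := (uniformlyConvexOfPower_two_of_convexityModulus h2uc).rpow_norm_sub_le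
    (by positivity) le_rfl (le_max_left ‖x‖ ‖y‖) (le_max_right _ _)
  rw [sub_self, Real.rpow_zero, mul_one, Real.rpow_two] at key
  have hpair := two_mul_add_sq_sub_le_duality_pairing hJ x y
  have := mul_le_mul_of_nonneg_right (norm_duality_add_le hJn x y) (norm_nonneg (x + y))
  linarith

lemma exists_norm_duality_sub_le_mul_rpow (hJ : ∀ x : E, J x x = ‖x‖ ^ 2)
    (hJn : ∀ x : E, ‖J x‖ = ‖x‖) {K q : ℝ} (hK : 0 < K) (hq1 : 1 < q) (hq2 : q ≤ 2)
    (hρ : ∀ τ > (0:ℝ), smoothnessModulus E τ ≤ K * τ ^ q) (R : ℝ) :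
    ∃ L, ∀ x y : E, ‖x‖ ≤ R → ‖y‖ ≤ R → ‖J x - J y‖ ≤ L * ‖x - y‖ ^ (q - 1) := by
  have hq0 : 0 < q - 1 := by linarith
  set p := q / (q - 1)
  have hp : 2 ≤ p := by rw [le_div_iff₀ hq0]; linarith
  have hpq : (p - 1) * (q - 1) = 1 := by rw [sub_mul, div_mul_cancel₀ _ hq0.ne']; ring
  set κ := min (2 * (4 * K) ^ (q - 1)⁻¹)⁻¹ 1 / 2 ^ (p - 1)
  refine ⟨(R ^ (p - 2) / κ) ^ (q - 1), fun x y hx hy => ?_⟩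
  have hR : 0 ≤ R := (norm_nonneg x).trans hx
  have key := (uniformlyConvexOfPower_dual_of_smoothnessModulus_le hK hq1 hρ).rpow_norm_sub_le
    (by positivity) hp (w := J x) (z := J y) (R := R) (by rwa [hJn]) (by rwa [hJn])
  rw [hJn, hJn] at key
  have hpair := two_mul_add_sq_sub_le_duality_pairing hJ x y
  have := mul_le_mul_of_nonneg_left (norm_add_le x y) (norm_nonneg (J x + J y))
  refine Real.le_rpow_mul_rpow_of_mul_rpow_le (p := p) (by positivity) (norm_nonneg _)
    (norm_nonneg _) (by positivity) hq0.le hpq ?_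
  calc κ * ‖J x - J y‖ ^ p
      ≤ ((‖x‖ - ‖y‖) ^ 2 + (‖x‖ + ‖y‖) * (‖x‖ + ‖y‖ - ‖J x + J y‖)) * R ^ (p - 2) := key
    _ ≤ (J x - J y) (x - y) * R ^ (p - 2) := by gcongr; linarith
    _ ≤ ‖J x - J y‖ * (‖x - y‖ * R ^ (p - 2)) := by
        rw [← mul_assoc]
        gcongr
        exact (J x - J y).apply_le_opNorm_mul_norm _

end DualityMap

lemma mul_norm_sub_le_norm_duality_sub_of_resolvent {E : Type*} [NormedAddCommGroup E]
    [NormedSpace ℝ E] {J : E → (E →L[ℝ] ℝ)} {A : Set (E × (E →L[ℝ] ℝ))}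
    (hmono : ∀ p ∈ A, ∀ p' ∈ A, 0 ≤ (p.2 - p'.2) (p.1 - p'.1)) {μ r : ℝ}
    (hJμ : ∀ x y : E, μ * ‖x - y‖ ^ 2 ≤ (J x - J y) (x - y)) (hr : 0 ≤ r)
    {x y z z' : E} {a a' : E →L[ℝ] ℝ} (ha : (z, a) ∈ A) (ha' : (z', a') ∈ A)
    (hx : J x = J z + r • a) (hy : J y = J z' + r • a') :
    μ * ‖z - z'‖ ≤ ‖J x - J y‖ := by
  have hfirm : (J z - J z') (z - z') ≤ (J x - J y) (z - z') := by
    have := mul_nonneg hr (hmono _ ha _ ha')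
    rw [hx, hy]
    simp only [add_apply, sub_apply, smul_apply, smul_eq_mul] at this ⊢
    linarith
  have h := (hJμ z z').trans (hfirm.trans ((J x - J y).apply_le_opNorm_mul_norm _))
  rcases (norm_nonneg (z - z')).eq_or_lt with h0 | h0
  · rw [← h0, mul_zero]
    exact norm_nonneg _
  · exact le_of_mul_le_mul_right (by linarith) h0

theorem stmt11_general {E : Type*} [NormedAddCommGroup E] [NormedSpace ℝ E]
    (J : E → (E →L[ℝ] ℝ))
    (hJ : ∀ x : E, J x x = ‖x‖ ^ 2) (hJn : ∀ x : E, ‖J x‖ = ‖x‖)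
    (K q : ℝ) (hK : 0 < K) (hq1 : 1 < q) (hq2 : q ≤ 2)
    -- q-uniform smoothness
    (hρ : ∀ τ > (0:ℝ), smoothnessModulus E τ ≤ K * τ ^ q)
    -- 2-uniform convexity
    (h2uc : ∃ c > (0:ℝ), ∀ ε ∈ Ioc (0:ℝ) 2, c * ε ^ 2 ≤ convexityModulus E ε)
    (C : Set E)
    -- monotone operator A ⊆ E × E* with D(A) ⊆ C
    (A : Set (E × (E →L[ℝ] ℝ)))
    (hmono : ∀ p ∈ A, ∀ p' ∈ A, 0 ≤ (p.2 - p'.2) (p.1 - p'.1))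
    (r : ℝ) (hr : 0 < r)
    -- range condition: the resolvent J_r = (J + rA)⁻¹J is defined on C
    (Jr : E → E)
    (hJr : ∀ x ∈ C, ∃ a : E →L[ℝ] ℝ, (Jr x, a) ∈ A ∧ J x = J (Jr x) + r • a) :
    ∀ R > (0:ℝ), ∃ L : ℝ, ∀ x ∈ C, ∀ y ∈ C, ‖x‖ ≤ R → ‖y‖ ≤ R →
      ‖Jr x - Jr y‖ ≤ L * ‖x - y‖ ^ (q - 1) := by
  intro R _
  obtain ⟨c, hc, hconv⟩ := h2uc
  obtain ⟨μ, hμ, hJμ⟩ := exists_mul_sq_norm_sub_le_duality_pairing hJ hJn hc hconv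
  obtain ⟨L, hL⟩ := exists_norm_duality_sub_le_mul_rpow hJ hJn hK hq1 hq2 hρ R
  refine ⟨L / μ, fun x hx y hy hxR hyR => ?_⟩
  obtain ⟨a, ha, hxa⟩ := hJr x hx
  obtain ⟨b, hb, hyb⟩ := hJr y hy
  have := mul_norm_sub_le_norm_duality_sub_of_resolvent hmono hJμ hr.le ha hb hxa hyb
  rw [div_mul_eq_mul_div, le_div_iff₀' hμ]
  exact this.trans (hL x y hxR hyR)

theorem stmt11 {E : Type*} [NormedAddCommGroup E] [NormedSpace ℝ E] [CompleteSpace E]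
    (J : E → (E →L[ℝ] ℝ))
    (hJ : ∀ x : E, J x x = ‖x‖ ^ 2) (hJn : ∀ x : E, ‖J x‖ = ‖x‖)
    (K q : ℝ) (hK : 0 < K) (hq1 : 1 < q) (hq2 : q ≤ 2)
    -- q-uniform smoothness
    (hρ : ∀ τ > (0:ℝ), smoothnessModulus E τ ≤ K * τ ^ q)
    -- 2-uniform convexity
    (h2uc : ∃ c > (0:ℝ), ∀ ε ∈ Ioc (0:ℝ) 2, c * ε ^ 2 ≤ convexityModulus E ε)
    (C : Set E) (hCne : C.Nonempty) (hCcl : IsClosed C) (hCcv : Convex ℝ C)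
    -- monotone operator A ⊆ E × E* with D(A) ⊆ C
    (A : Set (E × (E →L[ℝ] ℝ)))
    (hmono : ∀ p ∈ A, ∀ p' ∈ A, 0 ≤ (p.2 - p'.2) (p.1 - p'.1))
    (hDA : ∀ p ∈ A, p.1 ∈ C)
    (r : ℝ) (hr : 0 < r)
    -- range condition: the resolvent J_r = (J + rA)⁻¹J is defined on C
    (Jr : E → E)
    (hJr : ∀ x ∈ C, ∃ a : E →L[ℝ] ℝ, (Jr x, a) ∈ A ∧ J x = J (Jr x) + r • a) :
    ∀ R > (0:ℝ), ∃ L : ℝ, ∀ x ∈ C, ∀ y ∈ C, ‖x‖ ≤ R → ‖y‖ ≤ R →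
      ‖Jr x - Jr y‖ ≤ L * ‖x - y‖ ^ (q - 1) :=
  stmt11_general J hJ hJn K q hK hq1 hq2 hρ h2uc C A hmono r hr Jr hJr
end

section
/- Let E be a 2-uniformly smooth and 2-uniformly convex real Banach space, C ⊆ E nonempty closed convex, and T: C → E a firmly nonexpansive type mapping. Then T is globally Hölder/Lipschitz continuous: there exists a constant L (independent of any bound on ‖x‖, ‖y‖) such that ‖Tx − Ty‖ ≤ L‖x − y‖ for all x, y ∈ C. -/
open Set

/-!
Firm nonexpansiveness sandwiches `(J (T x) - J (T y)) (T x - T y)` between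
`m * ‖T x - T y‖ ^ 2` and `L * ‖x - y‖ * ‖T x - T y‖`, where `m` is a strong monotonicity constant
of `J` and `L` a Lipschitz constant of `J`; so `T` is `L / m`-Lipschitz.

`J` is Lipschitz by 2-uniform smoothness: it gives the upper quadratic estimate
`‖x + h‖ ^ 2 ≤ ‖x‖ ^ 2 + 2 J x h + L ‖h‖ ^ 2`, which, played against the subgradient inequality
`‖p‖ ^ 2 + 2 J p (z - p) ≤ ‖z‖ ^ 2`, bounds `(J x - J y) h`.

`J` is strongly monotone by 2-uniform convexity: the radial part is controlled by
`(‖u‖ - ‖v‖) ^ 2 ≤ (J u - J v) (u - v)`, and for points of equal norm the modulus of convexity gives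
`4 c ‖u - v‖ ^ 2 ≤ (J u - J v) (u - v)`.
-/

section Moduli

variable {E : Type*} [NormedAddCommGroup E] [NormedSpace ℝ E]

theorem le_smoothnessModulus_s17 {a b : E} (ha : ‖a‖ ≤ 1) (hb : ‖b‖ ≤ 1) (τ : ℝ) :
    (‖a + τ • b‖ + ‖a - τ • b‖) / 2 - 1 ≤ smoothnessModulus E τ := by
  refine le_csSup ⟨|τ|, ?_⟩ ⟨a, b, ha, hb, rfl⟩
  rintro t ⟨x, y, hx, hy, rfl⟩
  have hτy : ‖τ • y‖ ≤ |τ| := by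
    simpa [norm_smul] using mul_le_mul_of_nonneg_left hy (abs_nonneg τ)
  linarith [norm_add_le x (τ • y), norm_sub_le x (τ • y)]

theorem convexityModulus_le {a b : E} (ha : ‖a‖ ≤ 1) (hb : ‖b‖ ≤ 1) :
    convexityModulus E ‖a - b‖ ≤ 1 - ‖a + b‖ / 2 := by
  refine csInf_le ⟨0, ?_⟩ ⟨a, b, ha, hb, rfl, rfl⟩
  rintro t ⟨x, y, hx, hy, -, rfl⟩
  linarith [norm_add_le x y]

theorem norm_mul_norm_add_add_norm_sub_le {K : ℝ} (hK : 0 ≤ K)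
    (hρ : ∀ τ > (0:ℝ), smoothnessModulus E τ ≤ K * τ ^ 2) (x h : E) :
    ‖x‖ * (‖x + h‖ + ‖x - h‖) ≤ 2 * ‖x‖ ^ 2 + 2 * K * ‖h‖ ^ 2 := by
  rcases eq_or_ne x 0 with rfl | hx
  · simp only [norm_zero, zero_mul]
    positivity
  rcases eq_or_ne h 0 with rfl | hh
  · simp only [add_zero, sub_zero, norm_zero]
    nlinarith
  have hxn : 0 < ‖x‖ := norm_pos_iff.mpr hx
  have hhn : 0 < ‖h‖ := norm_pos_iff.mpr hh
  have hτ : 0 < ‖h‖ / ‖x‖ := div_pos hhn hxn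
  have hscale : (‖h‖ / ‖x‖) • ‖h‖⁻¹ • h = ‖x‖⁻¹ • h := by
    rw [smul_smul]
    congr 1
    field_simp
  have hmod := (le_smoothnessModulus_s17 (a := ‖x‖⁻¹ • x) (b := ‖h‖⁻¹ • h)
    (by simp [norm_smul, hxn.ne']) (by simp [norm_smul, hhn.ne']) _).trans (hρ _ hτ)
  rw [hscale, ← smul_add, ← smul_sub, norm_smul, norm_smul, norm_inv, norm_norm] at hmod
  field_simp at hmod
  nlinarith

theorem norm_mul_norm_add_add_le {c : ℝ}
    (hδ : ∀ ε ∈ Ioc (0:ℝ) 2, c * ε ^ 2 ≤ convexityModulus E ε) {u v : E} (huv : ‖u‖ ≤ ‖v‖) :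
    ‖v‖ * ‖u + v‖ + 2 * c * ‖u - v‖ ^ 2 ≤ 2 * ‖v‖ ^ 2 := by
  rcases eq_or_ne u v with rfl | hne
  · rw [← two_smul ℝ u, norm_smul]
    simp only [sub_self, norm_zero, Real.norm_two]
    nlinarith
  have hv : v ≠ 0 := by
    rintro rfl
    exact hne (norm_le_zero_iff.mp (by simpa using huv))
  have hvn : 0 < ‖v‖ := norm_pos_iff.mpr hv
  have hd : 0 < ‖u - v‖ := norm_pos_iff.mpr (sub_ne_zero.mpr hne)
  have hε : ‖u - v‖ / ‖v‖ ∈ Ioc (0:ℝ) 2 := by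
    refine ⟨div_pos hd hvn, (div_le_iff₀ hvn).mpr ?_⟩
    linarith [norm_sub_le u v]
  have hmod := convexityModulus_le (a := ‖v‖⁻¹ • u) (b := ‖v‖⁻¹ • v)
    (by simpa [norm_smul, hvn.ne', inv_mul_le_one₀ hvn] using huv) (by simp [norm_smul, hvn.ne'])
  rw [← smul_sub, ← smul_add, norm_smul, norm_smul, norm_inv, norm_norm, inv_mul_eq_div,
    inv_mul_eq_div] at hmod
  have hconv := (hδ _ hε).trans hmod
  field_simp at hconv
  nlinarith

end Moduli

structure IsNormalizedDualityMap {E : Type*} [NormedAddCommGroup E] [NormedSpace ℝ E]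
    (J : E → E →L[ℝ] ℝ) : Prop where
  apply_self : ∀ x, J x x = ‖x‖ ^ 2
  norm_apply : ∀ x, ‖J x‖ = ‖x‖

theorem ContinuousLinearMap.opNorm_le_of_two_mul_le {E : Type*} [NormedAddCommGroup E]
    [NormedSpace ℝ E] {f : E →L[ℝ] ℝ} {C d : ℝ} (hC : 0 ≤ C) (hd : 0 < d)
    (hf : ∀ h, 2 * f h ≤ C * (d ^ 2 + ‖h‖ ^ 2)) : ‖f‖ ≤ C * d := by
  refine f.opNorm_le_of_unit_norm (by positivity) fun w hw => ?_
  have hpos := hf (d • w)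
  have hneg := hf (-(d • w))
  simp only [map_neg, map_smul, smul_eq_mul, norm_neg, norm_smul, hw, Real.norm_eq_abs,
    abs_of_pos hd] at hpos hneg
  rw [Real.norm_eq_abs, abs_le]
  constructor <;> nlinarith

namespace IsNormalizedDualityMap

variable {E : Type*} [NormedAddCommGroup E] [NormedSpace ℝ E] {J : E → E →L[ℝ] ℝ}

theorem abs_apply_le (hJ : IsNormalizedDualityMap J) (x z : E) : |J x z| ≤ ‖x‖ * ‖z‖ := by
  simpa [hJ.norm_apply x] using (J x).le_opNorm z

theorem apply_le (hJ : IsNormalizedDualityMap J) (x z : E) : J x z ≤ ‖x‖ * ‖z‖ :=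
  (le_abs_self _).trans (hJ.abs_apply_le x z)

theorem apply_zero (hJ : IsNormalizedDualityMap J) : J 0 = 0 :=
  norm_eq_zero.mp ((hJ.norm_apply 0).trans norm_zero)

theorem sq_norm_add_two_mul_apply_sub_le (hJ : IsNormalizedDualityMap J) (p z : E) :
    ‖p‖ ^ 2 + 2 * J p (z - p) ≤ ‖z‖ ^ 2 := by
  rw [map_sub, hJ.apply_self]
  nlinarith [hJ.apply_le p z, sq_nonneg (‖p‖ - ‖z‖)]

theorem sq_norm_sub_norm_le (hJ : IsNormalizedDualityMap J) (u v : E) :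
    (‖u‖ - ‖v‖) ^ 2 ≤ (J u - J v) (u - v) := by
  rw [sub_apply, map_sub, map_sub, hJ.apply_self, hJ.apply_self]
  nlinarith [hJ.apply_le u v, hJ.apply_le v u]

/-- The constant dominates `5` (case `‖x‖ < ‖h‖`) and `(2 * K + 1) ^ 2 + 4 * K` (squaring the
smoothness estimate when `‖h‖ ≤ ‖x‖`). -/
theorem sq_norm_add_le (hJ : IsNormalizedDualityMap J) {K : ℝ} (hK : 0 ≤ K)
    (hρ : ∀ τ > (0:ℝ), smoothnessModulus E τ ≤ K * τ ^ 2) (x h : E) :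
    ‖x + h‖ ^ 2 ≤ ‖x‖ ^ 2 + 2 * J x h + 5 * (K + 1) ^ 2 * ‖h‖ ^ 2 := by
  obtain ⟨hlow, hup⟩ := abs_le.mp (hJ.abs_apply_le x h)
  rcases lt_or_ge ‖x‖ ‖h‖ with hxh | hhx
  · have hsq : ‖x + h‖ ^ 2 ≤ (‖x‖ + ‖h‖) ^ 2 :=
      pow_le_pow_left₀ (norm_nonneg _) (norm_add_le x h) 2
    nlinarith [norm_nonneg x, sq_nonneg K]
  rcases eq_or_ne x 0 with rfl | hx
  · obtain rfl : h = 0 := norm_le_zero_iff.mp (by simpa using hhx)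
    simp
  have hsub : ‖x‖ ^ 2 - J x h ≤ ‖x‖ * ‖x - h‖ := by
    simpa [map_sub, hJ.apply_self] using hJ.apply_le x (x - h)
  have hroot : ‖x‖ * ‖x + h‖ ≤ ‖x‖ ^ 2 + J x h + 2 * K * ‖h‖ ^ 2 := by
    nlinarith [norm_mul_norm_add_add_norm_sub_le hK hρ x h]
  have hsq : (‖x‖ * ‖x + h‖) ^ 2 ≤ (‖x‖ ^ 2 + J x h + 2 * K * ‖h‖ ^ 2) ^ 2 :=
    pow_le_pow_left₀ (by positivity) hroot 2
  have hh2 : ‖h‖ ^ 2 ≤ ‖x‖ ^ 2 := pow_le_pow_left₀ (norm_nonneg h) hhx 2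
  have hj2 : J x h ^ 2 ≤ ‖x‖ ^ 2 * ‖h‖ ^ 2 := by nlinarith
  have hjx : J x h ≤ ‖x‖ ^ 2 := by nlinarith [norm_nonneg x]
  refine le_of_mul_le_mul_left ?_ (by positivity : 0 < ‖x‖ ^ 2)
  nlinarith [mul_le_mul_of_nonneg_left hh2 (sq_nonneg ‖h‖),
    mul_le_mul_of_nonneg_left hjx (sq_nonneg ‖h‖), sq_nonneg K]

theorem norm_sub_le_mul_norm_sub (hJ : IsNormalizedDualityMap J) {K : ℝ} (hK : 0 ≤ K)
    (hρ : ∀ τ > (0:ℝ), smoothnessModulus E τ ≤ K * τ ^ 2) (x y : E) :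
    ‖J x - J y‖ ≤ 5 * (K + 1) ^ 2 * ‖x - y‖ := by
  rcases eq_or_ne x y with rfl | hne
  · simp
  refine (J x - J y).opNorm_le_of_two_mul_le (by positivity)
    (norm_pos_iff.mpr (sub_ne_zero.mpr hne)) fun h => ?_
  have hsub := hJ.sq_norm_add_two_mul_apply_sub_le x (y + h)
  have hy := hJ.sq_norm_add_le hK hρ y h
  have hx := hJ.sq_norm_add_le hK hρ x (y - x)
  rw [add_sub_cancel] at hx
  rw [show y + h - x = (y - x) + h by abel, map_add] at hsub
  rw [sub_apply, norm_sub_rev]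
  linarith

theorem four_mul_sq_norm_sub_le_of_norm_eq (hJ : IsNormalizedDualityMap J) {c : ℝ}
    (hδ : ∀ ε ∈ Ioc (0:ℝ) 2, c * ε ^ 2 ≤ convexityModulus E ε) {u v : E} (huv : ‖u‖ = ‖v‖) :
    4 * c * ‖u - v‖ ^ 2 ≤ (J u - J v) (u - v) := by
  have hconv := norm_mul_norm_add_add_le hδ huv.le
  have hu := hJ.apply_le u (u + v)
  have hv := hJ.apply_le v (u + v)
  rw [map_add, hJ.apply_self] at hu hv
  rw [sub_apply, map_sub, map_sub, hJ.apply_self, hJ.apply_self]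
  rw [huv] at hu ⊢
  linarith

/-- Rescaling `v` to `v' = (‖u‖ / ‖v‖) • v` reduces to the equal-norm case; the price is
`‖v' - v‖ = |‖u‖ - ‖v‖|`, paid through the Lipschitz bound on `J`. -/
theorem tangential_le (hJ : IsNormalizedDualityMap J) {c L : ℝ} (hc : 0 ≤ c)
    (hδ : ∀ ε ∈ Ioc (0:ℝ) 2, c * ε ^ 2 ≤ convexityModulus E ε) (hL : 0 ≤ L)
    (hLip : ∀ x y, ‖J x - J y‖ ≤ L * ‖x - y‖) (u v : E) :
    4 * c * (‖u - v‖ - |‖u‖ - ‖v‖|) ^ 2 - 3 * L * |‖u‖ - ‖v‖| * ‖u - v‖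
      ≤ (J u - J v) (u - v) := by
  rcases eq_or_ne v 0 with rfl | hv
  · simp only [hJ.apply_zero, sub_zero, norm_zero, abs_norm, sub_self, hJ.apply_self]
    nlinarith [norm_nonneg u]
  have hvn : 0 < ‖v‖ := norm_pos_iff.mpr hv
  set v' := (‖u‖ / ‖v‖) • v with hv'
  have hv'n : ‖v'‖ = ‖u‖ := by
    rw [hv', norm_smul, Real.norm_eq_abs, abs_div, abs_norm, abs_norm, div_mul_cancel₀ _ hvn.ne']
  have hv'v : ‖v' - v‖ = |‖u‖ - ‖v‖| := by
    rw [show v' - v = (‖u‖ / ‖v‖ - 1) • v by rw [sub_smul, one_smul], norm_smul,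
      Real.norm_eq_abs, div_sub_one hvn.ne', abs_div, abs_norm, div_mul_cancel₀ _ hvn.ne']
  set δ := |‖u‖ - ‖v‖|
  set d := ‖u - v‖
  have hδd : δ ≤ d := abs_norm_sub_norm_le u v
  have hlow : d - δ ≤ ‖u - v'‖ := by
    have := norm_add_le (u - v') (v' - v)
    rw [sub_add_sub_cancel, hv'v] at this
    linarith
  have hup : ‖u - v'‖ ≤ 2 * d := by
    have := norm_sub_le (u - v) (v' - v)
    rw [sub_sub_sub_cancel_right, hv'v] at this
    linarith
  have hsplit : (J u - J v) (u - v)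
      = (J u - J v') (u - v') + (J u - J v') (v' - v) + (J v' - J v) (u - v) := by
    simp only [sub_apply, map_sub]
    ring
  have hmain := hJ.four_mul_sq_norm_sub_le_of_norm_eq hδ hv'n.symm
  have herr₁ : -(L * ‖u - v'‖ * δ) ≤ (J u - J v') (v' - v) := by
    have := (J u - J v').le_of_opNorm_le (hLip u v') (v' - v)
    rw [Real.norm_eq_abs, hv'v] at this
    exact (abs_le.mp this).1
  have herr₂ : -(L * δ * d) ≤ (J v' - J v) (u - v) := by
    have := (J v' - J v).le_of_opNorm_le (hLip v' v) (u - v)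
    rw [Real.norm_eq_abs, hv'v] at this
    exact (abs_le.mp this).1
  have hsq : (d - δ) ^ 2 ≤ ‖u - v'‖ ^ 2 := pow_le_pow_left₀ (sub_nonneg.mpr hδd) hlow 2
  have hδ0 : 0 ≤ δ := abs_nonneg _
  nlinarith [mul_le_mul_of_nonneg_left hsq hc, mul_le_mul_of_nonneg_right hup (mul_nonneg hL hδ0)]

theorem exists_pos_mul_sq_norm_sub_le (hJ : IsNormalizedDualityMap J) {c L : ℝ} (hc : 0 < c)
    (hδ : ∀ ε ∈ Ioc (0:ℝ) 2, c * ε ^ 2 ≤ convexityModulus E ε) (hL : 0 < L)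
    (hLip : ∀ x y, ‖J x - J y‖ ≤ L * ‖x - y‖) :
    ∃ m > 0, ∀ u v : E, m * ‖u - v‖ ^ 2 ≤ (J u - J v) (u - v) := by
  set θ := min (1 / 2 : ℝ) (c / (6 * L))
  have hθ : 0 < θ := lt_min (by norm_num) (by positivity)
  have hθhalf : θ ≤ 1 / 2 := min_le_left _ _
  have hθL : 6 * L * θ ≤ c := (le_div_iff₀' (by positivity)).mp (min_le_right _ _)
  refine ⟨min (θ ^ 2) (c / 2), lt_min (by positivity) (by positivity), fun u v => ?_⟩
  have hmθ := min_le_left (θ ^ 2) (c / 2)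
  have hmc := min_le_right (θ ^ 2) (c / 2)
  have hd : 0 ≤ ‖u - v‖ := norm_nonneg _
  rcases le_or_gt (θ * ‖u - v‖) |‖u‖ - ‖v‖| with hradial | htangential
  · have hsq : (θ * ‖u - v‖) ^ 2 ≤ |‖u‖ - ‖v‖| ^ 2 := pow_le_pow_left₀ (by positivity) hradial 2
    rw [sq_abs] at hsq
    nlinarith [hJ.sq_norm_sub_norm_le u v, mul_le_mul_of_nonneg_right hmθ (sq_nonneg ‖u - v‖)]
  · have hhalf : ‖u - v‖ / 2 ≤ ‖u - v‖ - |‖u‖ - ‖v‖| := by nlinarith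
    have hsq : (‖u - v‖ / 2) ^ 2 ≤ (‖u - v‖ - |‖u‖ - ‖v‖|) ^ 2 :=
      pow_le_pow_left₀ (by positivity) hhalf 2
    have herr : 3 * L * |‖u‖ - ‖v‖| * ‖u - v‖ ≤ c / 2 * ‖u - v‖ ^ 2 := by
      nlinarith [mul_le_mul_of_nonneg_left htangential.le (mul_nonneg hL.le hd)]
    nlinarith [hJ.tangential_le hc.le hδ hL.le hLip u v,
      mul_le_mul_of_nonneg_right hmc (sq_nonneg ‖u - v‖)]

end IsNormalizedDualityMap

theorem stmt17_general {E : Type*} [NormedAddCommGroup E] [NormedSpace ℝ E]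
    (J : E → (E →L[ℝ] ℝ))
    (hJ : ∀ x : E, J x x = ‖x‖ ^ 2) (hJn : ∀ x : E, ‖J x‖ = ‖x‖)
    (K : ℝ) (hK : 0 < K)
    -- 2-uniform smoothness
    (hρ : ∀ τ > (0:ℝ), smoothnessModulus E τ ≤ K * τ ^ 2)
    -- 2-uniform convexity
    (h2uc : ∃ c > (0:ℝ), ∀ ε ∈ Ioc (0:ℝ) 2, c * ε ^ 2 ≤ convexityModulus E ε)
    (C : Set E)
    (T : E → E)
    -- firmly nonexpansive type on C
    (hT : ∀ x ∈ C, ∀ y ∈ C,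
      (J (T x) - J (T y)) (T x - T y) ≤ (J x - J y) (T x - T y)) :
    ∃ L : ℝ, ∀ x ∈ C, ∀ y ∈ C, ‖T x - T y‖ ≤ L * ‖x - y‖ := by
  have hduality : IsNormalizedDualityMap J := ⟨hJ, hJn⟩
  obtain ⟨c, hc, hδ⟩ := h2uc
  set L := 5 * (K + 1) ^ 2
  have hLip : ∀ x y, ‖J x - J y‖ ≤ L * ‖x - y‖ := hduality.norm_sub_le_mul_norm_sub hK.le hρ
  obtain ⟨m, hm, hmono⟩ := hduality.exists_pos_mul_sq_norm_sub_le hc hδ (by positivity) hLip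
  refine ⟨L / m, fun x hx y hy => ?_⟩
  have key : m * ‖T x - T y‖ ^ 2 ≤ L * ‖x - y‖ * ‖T x - T y‖ :=
    calc m * ‖T x - T y‖ ^ 2 ≤ (J (T x) - J (T y)) (T x - T y) := hmono _ _
      _ ≤ (J x - J y) (T x - T y) := hT x hx y hy
      _ ≤ ‖J x - J y‖ * ‖T x - T y‖ := (le_abs_self _).trans ((J x - J y).le_opNorm _)
      _ ≤ L * ‖x - y‖ * ‖T x - T y‖ := by gcongr; exact hLip x y
  rcases (norm_nonneg (T x - T y)).eq_or_lt with h0 | hpos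
  · rw [← h0]
    positivity
  · rw [div_mul_eq_mul_div, le_div_iff₀ hm]
    nlinarith

theorem stmt17 {E : Type*} [NormedAddCommGroup E] [NormedSpace ℝ E] [CompleteSpace E]
    (J : E → (E →L[ℝ] ℝ))
    (hJ : ∀ x : E, J x x = ‖x‖ ^ 2) (hJn : ∀ x : E, ‖J x‖ = ‖x‖)
    (K : ℝ) (hK : 0 < K)
    -- 2-uniform smoothness
    (hρ : ∀ τ > (0:ℝ), smoothnessModulus E τ ≤ K * τ ^ 2)
    -- 2-uniform convexity
    (h2uc : ∃ c > (0:ℝ), ∀ ε ∈ Ioc (0:ℝ) 2, c * ε ^ 2 ≤ convexityModulus E ε)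
    (C : Set E) (hCne : C.Nonempty) (hCcl : IsClosed C) (hCcv : Convex ℝ C)
    (T : E → E)
    -- firmly nonexpansive type on C
    (hT : ∀ x ∈ C, ∀ y ∈ C,
      (J (T x) - J (T y)) (T x - T y) ≤ (J x - J y) (T x - T y)) :
    ∃ L : ℝ, ∀ x ∈ C, ∀ y ∈ C, ‖T x - T y‖ ≤ L * ‖x - y‖ :=
  stmt17_general J hJ hJn K hK hρ h2uc C T hT
end
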